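/- arXiv:cmp-lg/9603002 — 2 statements merged into one kernel-verified Lean document; each statement's English description precedes it below -/
import Mathlib

section
/- If G is a left-linear context-free grammar, then for every state s of M(G) reachable from the start state s0, any two dotted rules A→α·β and A'→α'·β' belonging to s satisfy α = α'; consequently, for each reachable state s the set Stacks(s) contains exactly one stack, so every state has a single collapsing-congruence class and unfolding by the collapsing congruence leaves M(G) unchanged. -/
/-!
Infrastructure for finite-state approximation of context-free grammars
(Pereira & Wright). We use Mathlib's `ContextFreeGrammar`.

A dotted rule `A → α · β` is represented as `(some A, α, β)`;
the auxiliary dotted rules `S' → · S` and `S' → S ·` are represented with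
first component `none`.  States of the LR(0) characteristic machine `M(G)`
are sets of dotted rules (the determinization by the subset construction);
the transition function `next` is total, with the empty set `∅` playing the
role of "undefined", so genuine transitions are those with nonempty target.
-/

namespace LRApprox

universe uN uT

/-- Context-free grammar as in the older Mathlib, with the type of nonterminals
in an arbitrary universe (Mathlib's `ContextFreeGrammar` now restricts it to `Type`). -/
structure ContextFreeGrammar.{u, v} (T : Type v) where
  NT : Type u
  initial : NT
  rules : Finset (ContextFreeRule T NT)

variable {T : Type uT}

/-- A dotted rule `A → α · β`; `none` as first component stands for the
auxiliary start symbol `S'`. -/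
abbrev DottedRule (g : ContextFreeGrammar.{uN} T) : Type _ :=
  Option g.NT × List (Symbol T g.NT) × List (Symbol T g.NT)

/-- A state of the characteristic machine `M(G)`: a set of dotted rules. -/
abbrev LRState (g : ContextFreeGrammar.{uN} T) : Type _ := Set (DottedRule g)

/-- Closure of a set of dotted rules: whenever `A → α · B β` is present and
`B → γ` is a rule, add `B → · γ`. -/
inductive Closure (g : ContextFreeGrammar.{uN} T) (R : Set (DottedRule g)) :
    DottedRule g → Prop
  | base {d : DottedRule g} : d ∈ R → Closure g R d
  | step {A : Option g.NT} {α β : List (Symbol T g.NT)} {B : g.NT}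
      (r : ContextFreeRule T g.NT) :
      Closure g R (A, α, Symbol.nonterminal B :: β) →
      r ∈ g.rules → r.input = B → Closure g R (some B, [], r.output)

/-- The transition function `δ` of `M(G)`: shift the dot over `X` and take the
closure.  The empty set plays the role of "undefined". -/
def next (g : ContextFreeGrammar.{uN} T) (s : LRState g) (X : Symbol T g.NT) : LRState g :=
  {d | Closure g {d' | ∃ A α β, (A, α, X :: β) ∈ s ∧ d' = (A, α ++ [X], β)} d}

/-- The start state `s₀` of `M(G)`: the closure of `{S' → · S}`. -/
def start (g : ContextFreeGrammar.{uN} T) : LRState g :=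
  {d | Closure g {(none, [], [Symbol.nonterminal g.initial])} d}

/-- The dotted rule `S' → S ·`. -/
def finalDR (g : ContextFreeGrammar.{uN} T) : DottedRule g :=
  (none, [Symbol.nonterminal g.initial], [])

/-- A state is final iff it contains `S' → S ·`. -/
def IsFinal (g : ContextFreeGrammar.{uN} T) (s : LRState g) : Prop := finalDR g ∈ s

/-- Iterated transition function, extended to strings of symbols. -/
def nextStar (g : ContextFreeGrammar.{uN} T) (s : LRState g)
    (α : List (Symbol T g.NT)) : LRState g :=
  α.foldl (next g) s

/-- A stack of the shift-reduce recognizer: a sequence of (state, symbol) pairs. -/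
abbrev Stack (g : ContextFreeGrammar.{uN} T) : Type _ :=
  List (LRState g × Symbol T g.NT)

/-- `Stacks g s σ` iff `σ = ⟨q₀,X₀⟩…⟨q_k,X_k⟩` with `q₀ = s₀`,
`q_i = δ(q_{i-1},X_{i-1})` and `s = δ(q_k,X_k)`; in addition `Stacks s₀`
contains the empty sequence. -/
inductive Stacks (g : ContextFreeGrammar.{uN} T) : LRState g → Stack g → Prop
  | nil : Stacks g (start g) []
  | snoc {q : LRState g} {σ : Stack g} {X : Symbol T g.NT} :
      Stacks g q σ → next g q X ≠ ∅ → Stacks g (next g q X) (σ ++ [(q, X)])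

/-- A configuration `⟨s, σ, w⟩` of the shift-reduce recognizer `R(G)`. -/
structure Cfg (g : ContextFreeGrammar.{uN} T) where
  state : LRState g
  stack : Stack g
  input : List T

/-- A shift move of `R(G)`. -/
inductive ShiftStep (g : ContextFreeGrammar.{uN} T) : Cfg g → Cfg g → Prop
  | shift {s : LRState g} {σ : Stack g} {x : T} {w : List T} :
      next g s (Symbol.terminal x) ≠ ∅ →
      ShiftStep g ⟨s, σ, x :: w⟩
        ⟨next g s (Symbol.terminal x), σ ++ [(s, Symbol.terminal x)], w⟩

/-- A reduce move of `R(G)`. -/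
inductive ReduceStep (g : ContextFreeGrammar.{uN} T) : Cfg g → Cfg g → Prop
  | empty {s : LRState g} {σ : Stack g} {w : List T} {A : g.NT} :
      (some A, ([] : List (Symbol T g.NT)), ([] : List (Symbol T g.NT))) ∈ s →
      next g s (Symbol.nonterminal A) ≠ ∅ →
      ReduceStep g ⟨s, σ, w⟩
        ⟨next g s (Symbol.nonterminal A), σ ++ [(s, Symbol.nonterminal A)], w⟩
  | pop {s : LRState g} {σ τ : Stack g} {w : List T} {A : g.NT}
      {s₁ : LRState g} {X₁ : Symbol T g.NT} :
      (some A, ((s₁, X₁) :: τ).map Prod.snd, ([] : List (Symbol T g.NT))) ∈ s →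
      next g s₁ (Symbol.nonterminal A) ≠ ∅ →
      ReduceStep g ⟨s, σ ++ (s₁, X₁) :: τ, w⟩
        ⟨next g s₁ (Symbol.nonterminal A), σ ++ [(s₁, Symbol.nonterminal A)], w⟩

/-- A move of the shift-reduce recognizer `R(G)`. -/
def Step (g : ContextFreeGrammar.{uN} T) (c c' : Cfg g) : Prop :=
  ShiftStep g c c' ∨ ReduceStep g c c'

/-- `R(G)` accepts `w`: some sequence of moves leads from the initial
configuration `⟨s₀, ε, w⟩` to a final configuration `⟨s, ⟨s₀,S⟩, ε⟩`, `s ∈ F`. -/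
def RAccepts (g : ContextFreeGrammar.{uN} T) (w : List T) : Prop :=
  ∃ s : LRState g, IsFinal g s ∧
    Relation.ReflTransGen (Step g) ⟨start g, [], w⟩
      ⟨s, [(start g, Symbol.nonterminal g.initial)], []⟩

/-- A stack congruence on `R(G)`: a family of equivalence relations on
`Stacks(s)`, compatible with pushing. -/
def IsStackCongruence (g : ContextFreeGrammar.{uN} T)
    (E : LRState g → Stack g → Stack g → Prop) : Prop :=
  (∀ s σ σ', E s σ σ' → Stacks g s σ ∧ Stacks g s σ') ∧
  (∀ s σ, Stacks g s σ → E s σ σ) ∧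
  (∀ s σ σ', E s σ σ' → E s σ' σ) ∧
  (∀ s σ₁ σ₂ σ₃, E s σ₁ σ₂ → E s σ₂ σ₃ → E s σ₁ σ₃) ∧
  (∀ s X σ σ', next g s X ≠ ∅ → E s σ σ' →
    E (next g s X) (σ ++ [(s, X)]) (σ' ++ [(s, X)]))

/-- A state of the unfolded recognizer `R_≡`: a state of `M(G)` together with
an equivalence class of stacks (represented as a set of stacks). -/
abbrev UState (g : ContextFreeGrammar.{uN} T) : Type _ := LRState g × Set (Stack g)

/-- Transition function `δ_≡` of the unfolded recognizer:
`δ_≡(⟨s,[σ]⟩, X) = ⟨δ(s,X), [σ⟨s,X⟩]⟩`. -/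
def uNext (g : ContextFreeGrammar.{uN} T) (E : LRState g → Stack g → Stack g → Prop)
    (p : UState g) (X : Symbol T g.NT) : UState g :=
  (next g p.1 X,
   {τ | Stacks g (next g p.1 X) τ ∧ ∃ σ ∈ p.2, E (next g p.1 X) τ (σ ++ [(p.1, X)])})

/-- Start state `⟨s₀, [ε]⟩` of the unfolded recognizer. -/
def uStart (g : ContextFreeGrammar.{uN} T)
    (E : LRState g → Stack g → Stack g → Prop) : UState g :=
  (start g, {τ | Stacks g (start g) τ ∧ E (start g) τ []})

/-- Genuine states of the unfolded recognizer: pairs `⟨s, [σ]_s⟩` with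
`σ ∈ Stacks(s)`. -/
def IsUState (g : ContextFreeGrammar.{uN} T)
    (E : LRState g → Stack g → Stack g → Prop) (p : UState g) : Prop :=
  ∃ σ, Stacks g p.1 σ ∧ p.2 = {τ | Stacks g p.1 τ ∧ E p.1 τ σ}

/-- Iterated `δ_≡`, extended to strings of symbols. -/
def uNextStar (g : ContextFreeGrammar.{uN} T)
    (E : LRState g → Stack g → Stack g → Prop)
    (p : UState g) (α : List (Symbol T g.NT)) : UState g :=
  α.foldl (uNext g E) p

/-- A configuration of the unfolded recognizer `R_≡`. -/
structure UCfg (g : ContextFreeGrammar.{uN} T) where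
  state : UState g
  stack : List (UState g × Symbol T g.NT)
  input : List T

/-- A shift move of the unfolded recognizer. -/
inductive UShiftStep (g : ContextFreeGrammar.{uN} T)
    (E : LRState g → Stack g → Stack g → Prop) : UCfg g → UCfg g → Prop
  | shift {p : UState g} {σ : List (UState g × Symbol T g.NT)} {x : T} {w : List T} :
      next g p.1 (Symbol.terminal x) ≠ ∅ →
      UShiftStep g E ⟨p, σ, x :: w⟩
        ⟨uNext g E p (Symbol.terminal x), σ ++ [(p, Symbol.terminal x)], w⟩

/-- A reduce move of the unfolded recognizer. -/
inductive UReduceStep (g : ContextFreeGrammar.{uN} T)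
    (E : LRState g → Stack g → Stack g → Prop) : UCfg g → UCfg g → Prop
  | empty {p : UState g} {σ : List (UState g × Symbol T g.NT)} {w : List T} {A : g.NT} :
      (some A, ([] : List (Symbol T g.NT)), ([] : List (Symbol T g.NT))) ∈ p.1 →
      next g p.1 (Symbol.nonterminal A) ≠ ∅ →
      UReduceStep g E ⟨p, σ, w⟩
        ⟨uNext g E p (Symbol.nonterminal A), σ ++ [(p, Symbol.nonterminal A)], w⟩
  | pop {p : UState g} {σ τ : List (UState g × Symbol T g.NT)} {w : List T} {A : g.NT}
      {p₁ : UState g} {X₁ : Symbol T g.NT} :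
      (some A, ((p₁, X₁) :: τ).map Prod.snd, ([] : List (Symbol T g.NT))) ∈ p.1 →
      next g p₁.1 (Symbol.nonterminal A) ≠ ∅ →
      UReduceStep g E ⟨p, σ ++ (p₁, X₁) :: τ, w⟩
        ⟨uNext g E p₁ (Symbol.nonterminal A), σ ++ [(p₁, Symbol.nonterminal A)], w⟩

/-- A move of the unfolded recognizer `R_≡`. -/
def UStep (g : ContextFreeGrammar.{uN} T)
    (E : LRState g → Stack g → Stack g → Prop) (c c' : UCfg g) : Prop :=
  UShiftStep g E c c' ∨ UReduceStep g E c c'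

/-- The unfolded recognizer `R_≡` accepts `w`. -/
def UAccepts (g : ContextFreeGrammar.{uN} T)
    (E : LRState g → Stack g → Stack g → Prop) (w : List T) : Prop :=
  ∃ p : UState g, IsFinal g p.1 ∧
    Relation.ReflTransGen (UStep g E) ⟨uStart g E, [], w⟩
      ⟨p, [(uStart g E, Symbol.nonterminal g.initial)], []⟩

/-- `Pop(p)`: the unfolded states reachable from `p` by a reduction. -/
def PopSet (g : ContextFreeGrammar.{uN} T)
    (E : LRState g → Stack g → Stack g → Prop) (p : UState g) : Set (UState g) :=
  {p' | ∃ (A : g.NT) (α : List (Symbol T g.NT)) (p'' : UState g),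
    IsUState g E p'' ∧
    (some A, α, ([] : List (Symbol T g.NT))) ∈ p.1 ∧
    (some A, ([] : List (Symbol T g.NT)), α) ∈ p''.1 ∧
    uNextStar g E p'' α = p ∧
    next g p''.1 (Symbol.nonterminal A) ≠ ∅ ∧
    uNext g E p'' (Symbol.nonterminal A) = p'}

/-- Paths in the flattening `F_≡` of the unfolded recognizer: terminal
transitions follow `δ_≡` and reductions become ε-transitions. -/
inductive FPath (g : ContextFreeGrammar.{uN} T)
    (E : LRState g → Stack g → Stack g → Prop) : UState g → List T → UState g → Prop
  | refl (p : UState g) : FPath g E p [] p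
  | shift {p : UState g} {x : T} {w : List T} {q : UState g} :
      next g p.1 (Symbol.terminal x) ≠ ∅ →
      FPath g E (uNext g E p (Symbol.terminal x)) w q → FPath g E p (x :: w) q
  | eps {p p' : UState g} {w : List T} {q : UState g} :
      p' ∈ PopSet g E p → FPath g E p' w q → FPath g E p w q

/-- The flattening `F_≡` accepts `w`. -/
def FAccepts (g : ContextFreeGrammar.{uN} T)
    (E : LRState g → Stack g → Stack g → Prop) (w : List T) : Prop :=
  ∃ q : UState g, IsFinal g q.1 ∧ FPath g E (uStart g E) w q

/-- A stack `⟨s₁,X₁⟩…⟨s_k,X_k⟩` is a loop if `δ(s_k,X_k) = s₁`. -/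
def IsLoop (g : ContextFreeGrammar.{uN} T) (τ : Stack g) : Prop :=
  ∃ p q : LRState g × Symbol T g.NT,
    τ.head? = some p ∧ τ.getLast? = some q ∧ next g q.1 q.2 = p.1

/-- A loop is minimal if no proper prefix of it is a loop. -/
def IsMinimalLoop (g : ContextFreeGrammar.{uN} T) (τ : Stack g) : Prop :=
  IsLoop g τ ∧ ∀ τ' : Stack g, τ' <+: τ → τ' ≠ τ → ¬ IsLoop g τ'

/-- A stack is collapsible if it contains a loop as a contiguous segment. -/
def Collapsible (g : ContextFreeGrammar.{uN} T) (σ : Stack g) : Prop :=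
  ∃ ρ τ υ : Stack g, σ = ρ ++ τ ++ υ ∧ IsLoop g τ

/-- `σ` immediately collapses to `σ'`: remove the earliest minimal loop. -/
def ImmediatelyCollapses (g : ContextFreeGrammar.{uN} T) (σ σ' : Stack g) : Prop :=
  ∃ ρ τ υ : Stack g, σ = ρ ++ τ ++ υ ∧ σ' = ρ ++ υ ∧ IsMinimalLoop g τ ∧
    ¬ ∃ ρ' τ' υ' : Stack g, σ = ρ' ++ τ' ++ υ' ∧ ρ' <+: ρ ∧ ρ' ≠ ρ ∧ IsLoop g τ'

/-- `σ` collapses to `σ'` by finitely many immediate collapses. -/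
def Collapses (g : ContextFreeGrammar.{uN} T) : Stack g → Stack g → Prop :=
  Relation.ReflTransGen (ImmediatelyCollapses g)

/-- Two stacks are collapsing-equivalent if they collapse to the same
uncollapsible stack. -/
def CollEquiv (g : ContextFreeGrammar.{uN} T) (σ σ' : Stack g) : Prop :=
  ∃ τ : Stack g, ¬ Collapsible g τ ∧ Collapses g σ τ ∧ Collapses g σ' τ

/-- The collapsing congruence: the restriction of collapsing equivalence to
the sets `Stacks(s)`. -/
def CollCong (g : ContextFreeGrammar.{uN} T) (s : LRState g) (σ σ' : Stack g) : Prop :=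
  Stacks g s σ ∧ Stacks g s σ' ∧ CollEquiv g σ σ'

/-- A CFG is left-linear if every rule has the form `A → Bβ` or `A → β`
with `β` a string of terminals. -/
def LeftLinear (g : ContextFreeGrammar.{uN} T) : Prop :=
  ∀ r ∈ g.rules, (∃ β : List T, r.output = β.map Symbol.terminal) ∨
    (∃ (B : g.NT) (β : List T), r.output = Symbol.nonterminal B :: β.map Symbol.terminal)

/-- A CFG is right-linear if every rule has the form `A → βB` or `A → β`
with `β` a string of terminals. -/
def RightLinear (g : ContextFreeGrammar.{uN} T) : Prop :=
  ∀ r ∈ g.rules, (∃ β : List T, r.output = β.map Symbol.terminal) ∨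
    (∃ (B : g.NT) (β : List T), r.output = β.map Symbol.terminal ++ [Symbol.nonterminal B])

/-- Reachable (genuine) states of `M(G)`. -/
def ReachableState (g : ContextFreeGrammar.{uN} T) (s : LRState g) : Prop :=
  s ≠ ∅ ∧ ∃ α : List (Symbol T g.NT), nextStar g (start g) α = s

end LRApprox

open LRApprox

/-!
In an item of a left-linear grammar only the first symbol after the dot can be a nonterminal,
and only while the dot is at the left end. Hence the closure operation never fires in a state
reached by a nonempty string, so `δ(s, X)` merely shifts the dot of the items of `s`; by
induction, every item of the state reached by `γ` has exactly `γ` before its dot. Since a stack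
of a state spells a string reaching it and stacks are determined by what they spell, every
reachable state has exactly one stack.
-/

namespace LRApprox

variable {T : Type*}

def IsTerminalString {N : Type*} (β : List (Symbol T N)) : Prop :=
  ∃ w : List T, β = w.map Symbol.terminal

theorem IsTerminalString.tail {N : Type*} {β : List (Symbol T N)} (h : IsTerminalString β) :
    IsTerminalString β.tail := by
  obtain ⟨w, rfl⟩ := h
  exact ⟨w.tail, List.map_tail.symm⟩

theorem not_isTerminalString_cons_nonterminal {N : Type*} (B : N) (β : List (Symbol T N)) :
    ¬ IsTerminalString (Symbol.nonterminal B :: β) := by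
  rintro ⟨_ | ⟨t, w⟩, h⟩ <;> simp at h

variable {g : ContextFreeGrammar T}

theorem LeftLinear.isTerminalString_tail (hg : LeftLinear g) {r : ContextFreeRule T g.NT}
    (hr : r ∈ g.rules) : IsTerminalString r.output.tail := by
  rcases hg r hr with ⟨w, hw⟩ | ⟨B, w, hw⟩
  · exact IsTerminalString.tail ⟨w, hw⟩
  · exact ⟨w, by simp [hw]⟩

theorem mem_of_closure {R : Set (DottedRule g)} (hR : ∀ d ∈ R, IsTerminalString d.2.2)
    {d : DottedRule g} (hd : Closure g R d) : d ∈ R := by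
  induction hd with
  | base h => exact h
  | step _ _ _ _ ih => exact absurd (hR _ ih) (not_isTerminalString_cons_nonterminal _ _)

theorem mem_next_of_isTerminalString_tail {s : LRState g}
    (hs : ∀ d ∈ s, IsTerminalString d.2.2.tail) {X : Symbol T g.NT} {d : DottedRule g}
    (hd : d ∈ next g s X) : ∃ A α β, (A, α, X :: β) ∈ s ∧ d = (A, α ++ [X], β) := by
  refine mem_of_closure ?_ hd
  rintro _ ⟨A, α, β, hmem, rfl⟩
  exact hs _ hmem

theorem next_empty (X : Symbol T g.NT) : next g ∅ X = ∅ :=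
  Set.eq_empty_of_forall_notMem fun _ hd ↦ by
    obtain ⟨_, _, _, hmem, -⟩ := mem_next_of_isTerminalString_tail (by simp) hd
    exact hmem

theorem nextStar_append_singleton (s : LRState g) (γ : List (Symbol T g.NT))
    (X : Symbol T g.NT) : nextStar g s (γ ++ [X]) = next g (nextStar g s γ) X := by
  simp [nextStar, List.foldl_append]

theorem mem_start (hg : LeftLinear g) {d : DottedRule g} (hd : d ∈ start g) :
    d.2.1 = [] ∧ IsTerminalString d.2.2.tail := by
  induction hd with
  | base h =>
    rw [Set.mem_singleton_iff] at h
    exact ⟨by rw [h], by rw [h]; exact ⟨[], rfl⟩⟩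
  | step r _ hr _ _ => exact ⟨rfl, hg.isTerminalString_tail hr⟩

theorem mem_nextStar_start (hg : LeftLinear g) (γ : List (Symbol T g.NT)) {d : DottedRule g}
    (hd : d ∈ nextStar g (start g) γ) : d.2.1 = γ ∧ IsTerminalString d.2.2.tail := by
  induction γ using List.reverseRecOn generalizing d with
  | nil => exact mem_start hg hd
  | append_singleton γ X ih =>
    rw [nextStar_append_singleton] at hd
    obtain ⟨A, α, β, hmem, rfl⟩ :=
      mem_next_of_isTerminalString_tail (fun d hd ↦ (ih hd).2) hd
    obtain ⟨hα, hβ⟩ := ih hmem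
    exact ⟨by rw [← hα], hβ.tail⟩

theorem Stacks.eq_nextStar {s : LRState g} {σ : Stack g} (h : Stacks g s σ) :
    s = nextStar g (start g) (σ.map Prod.snd) := by
  induction h with
  | nil => rfl
  | snoc _ _ ih => rw [List.map_append, List.map_singleton, nextStar_append_singleton, ← ih]

/-- A stack is determined by the string of symbols it spells, because the states on it are
the ones reached by the prefixes of that string. -/
theorem Stacks.eq_of_map_snd_eq {s s' : LRState g} {σ σ' : Stack g} (h : Stacks g s σ)
    (h' : Stacks g s' σ') (hσ : σ.map Prod.snd = σ'.map Prod.snd) : σ = σ' := by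
  induction h generalizing s' σ' with
  | nil => cases h' with
    | nil => rfl
    | snoc => simp at hσ
  | @snoc q τ X h _ ih => cases h' with
    | nil => simp at hσ
    | @snoc q' τ' X' h' _ =>
      rw [List.map_append, List.map_append] at hσ
      obtain ⟨hτ, hX⟩ := List.append_inj' hσ rfl
      have hq : q = q' := by rw [h.eq_nextStar, h'.eq_nextStar, hτ]
      simp only [List.map_cons, List.map_nil, List.cons.injEq, and_true] at hX
      rw [ih h' hτ, hX, hq]

theorem exists_stacks_nextStar_start (γ : List (Symbol T g.NT))
    (hγ : nextStar g (start g) γ ≠ ∅) : ∃ σ, Stacks g (nextStar g (start g) γ) σ := by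
  induction γ using List.reverseRecOn with
  | nil => exact ⟨[], Stacks.nil⟩
  | append_singleton γ X ih =>
    rw [nextStar_append_singleton] at hγ ⊢
    obtain ⟨σ, hσ⟩ := ih fun h ↦ hγ (by rw [h, next_empty])
    exact ⟨_, hσ.snoc hγ⟩

theorem Stacks.map_snd_eq_prefix (hg : LeftLinear g) {s : LRState g} {σ : Stack g}
    (h : Stacks g s σ) {d : DottedRule g} (hd : d ∈ s) : σ.map Prod.snd = d.2.1 := by
  rw [h.eq_nextStar] at hd
  exact (mem_nextStar_start hg _ hd).1.symm

theorem ReachableState.existsUnique_stacks (hg : LeftLinear g) {s : LRState g}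
    (hs : ReachableState g s) : ∃! σ, Stacks g s σ := by
  obtain ⟨hne, γ, rfl⟩ := hs
  obtain ⟨σ, hσ⟩ := exists_stacks_nextStar_start γ hne
  obtain ⟨d, hd⟩ := Set.nonempty_iff_ne_empty.2 hne
  refine ⟨σ, hσ, fun σ' hσ' ↦ hσ'.eq_of_map_snd_eq hσ ?_⟩
  rw [hσ'.map_snd_eq_prefix hg hd, hσ.map_snd_eq_prefix hg hd]

end LRApprox

/-- In a left-linear CFG, any two dotted rules in a reachable
state of `M(G)` have the same string before the dot; consequently each
reachable state has exactly one possible stack, hence a single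
collapsing-congruence class, so unfolding leaves `M(G)` unchanged. -/
theorem left_linear_single_stack {T : Type*} (g : LRApprox.ContextFreeGrammar T)
    (hg : LeftLinear g) :
    (∀ s : LRState g, ReachableState g s →
      ∀ d ∈ s, ∀ d' ∈ s, (d : DottedRule g).2.1 = (d' : DottedRule g).2.1) ∧
    (∀ s : LRState g, ReachableState g s → ∃! σ : Stack g, Stacks g s σ) ∧
    (∀ s : LRState g, ReachableState g s →
      ∃! c : Set (Stack g), ∃ σ : Stack g, Stacks g s σ ∧
        c = {σ' : Stack g | Stacks g s σ' ∧ CollEquiv g σ σ'}) := by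
  refine ⟨?_, fun s hs ↦ hs.existsUnique_stacks hg, fun s hs ↦ ?_⟩
  · rintro s ⟨-, γ, rfl⟩ d hd d' hd'
    rw [(mem_nextStar_start hg γ hd).1, (mem_nextStar_start hg γ hd').1]
  · obtain ⟨σ, hσ, hunique⟩ := hs.existsUnique_stacks hg
    refine ⟨_, ⟨σ, hσ, rfl⟩, ?_⟩
    rintro c ⟨σ', hσ', rfl⟩
    rw [hunique σ' hσ']
end

section
/- If every defining subgrammar def(X) in the strongly-connected-component decomposition of a context-free grammar G is left-linear or right-linear, then the language L(G) is regular. -/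
/-!
Infrastructure for the strongly-connected-component decomposition of a
context-free grammar (Pereira & Wright): the graph `conn(G)`, the components
`comp(X)`, the defining subgrammars `def(X)` (with out-of-component
nonterminals treated as pseudoterminals), and language substitution.
-/

namespace LRApprox

open scoped Classical

universe uN uT

variable {T : Type uT}

/-- One step of context-free transformation. -/
def ContextFreeGrammar.Produces {T : Type*} (g : ContextFreeGrammar T) (u v : List (Symbol T g.NT)) : Prop :=
  ∃ r ∈ g.rules, r.Rewrites u v

/-- Any number of steps of context-free transformation. -/
abbrev ContextFreeGrammar.Derives {T : Type*} (g : ContextFreeGrammar T) :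
    List (Symbol T g.NT) → List (Symbol T g.NT) → Prop :=
  Relation.ReflTransGen g.Produces

/-- The string is derivable from the initial nonterminal. -/
def ContextFreeGrammar.Generates {T : Type*} (g : ContextFreeGrammar T) (s : List (Symbol T g.NT)) : Prop :=
  g.Derives [Symbol.nonterminal g.initial] s

/-- The language generated by the grammar. -/
def ContextFreeGrammar.language {T : Type*} (g : ContextFreeGrammar T) : Language T :=
  { w : List T | g.Generates (w.map Symbol.terminal) }

/-- The edge relation of the graph `conn(G)`: an arc from `X` to `Y` whenever
`Y` occurs in the right-hand side of a rule of `G` whose left-hand side is `X`. -/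
def ConnStep (g : ContextFreeGrammar.{uN} T) (X Y : g.NT) : Prop :=
  ∃ r ∈ g.rules, r.input = X ∧ Symbol.nonterminal Y ∈ r.output

/-- `X` and `Y` lie in the same strongly connected component of `conn(G)`. -/
def SameComp (g : ContextFreeGrammar.{uN} T) (X Y : g.NT) : Prop :=
  Relation.ReflTransGen (ConnStep g) X Y ∧ Relation.ReflTransGen (ConnStep g) Y X

/-- Conversion of a symbol of `G` into a symbol of the defining subgrammar
`def(X)`: nonterminals outside `comp(X)` become pseudoterminals. -/
noncomputable def convSym (g : ContextFreeGrammar.{uN} T) (X : g.NT) :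
    Symbol T g.NT → Symbol (T ⊕ g.NT) {Y : g.NT // SameComp g X Y}
  | .terminal t => .terminal (Sum.inl t)
  | .nonterminal Y =>
      if h : SameComp g X Y then .nonterminal ⟨Y, h⟩ else .terminal (Sum.inr Y)

/-- The defining subgrammar `def(X)`: start symbol `X`, nonterminals
`comp(X)`, terminals `Σ` plus the pseudoterminals, and the rules of `G` whose
left-hand side lies in `comp(X)`. -/
noncomputable def defSub (g : ContextFreeGrammar.{uN} T) (X : g.NT) :
    ContextFreeGrammar.{uN} (T ⊕ g.NT) where
  NT := {Y : g.NT // SameComp g X Y}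
  initial := ⟨X, Relation.ReflTransGen.refl, Relation.ReflTransGen.refl⟩
  rules :=
    (g.rules.toList.filterMap fun r =>
      if h : SameComp g X r.input then
        some ⟨⟨r.input, h⟩, r.output.map (convSym g X)⟩
      else none).toFinset

/-- `Y` is a pseudoterminal of `def(X)`: it is not in `comp(X)` but occurs in
the right-hand side of a rule whose left-hand side is in `comp(X)`. -/
def IsPseudo (g : ContextFreeGrammar.{uN} T) (X Y : g.NT) : Prop :=
  ¬ SameComp g X Y ∧
    ∃ r ∈ g.rules, SameComp g X r.input ∧ Symbol.nonterminal Y ∈ r.output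

/-- `L_G(X)`: the terminal strings derivable from the nonterminal `X` in `G`. -/
def langFrom (g : ContextFreeGrammar.{uN} T) (X : g.NT) : Language T :=
  {w : List T | g.Derives [Symbol.nonterminal X] (w.map Symbol.terminal)}

/-- Extension of a substitution `f` from symbols to strings:
`f(c₁…c_n) = f(c₁)⋯f(c_n)`, with `f(ε) = {ε}`. -/
def substStr {α : Type*} {β : Type*} (f : α → Language β) : List α → Language β
  | [] => 1
  | c :: u => f c * substStr f u

/-- Extension of a substitution to a language: `f(L) = ⋃_{u ∈ L} f(u)`. -/
def substLang {α : Type*} {β : Type*} (f : α → Language β) (L : Language α) :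
    Language β :=
  ⋃ u ∈ L, substStr f u

/-!
For a nonterminal `X`, the language `L_G(X)` is obtained from `L(def(X))` by substituting `L_G(Y)`
for every pseudoterminal `Y` of `def(X)`, and each such `Y` reaches strictly fewer nonterminals
than `X` in `conn(G)`. So all `L_G(X)` are regular by well-founded induction: `L(def(X))` is
regular because `def(X)` is linear, and regular languages are closed under substituting regular
languages for letters. Both facts are checked on left quotients (Myhill–Nerode). In a right-linear
derivation the terminal prefix only grows, so a left quotient of a right-linear language is a
union of the languages of suffixes of right-hand sides. A left quotient of `f(L)` is a union of
languages `f(L')` and `M · f(L')`, with `L'` a left quotient of `L` and `M` a left quotient of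
some `f c`.
-/

lemma _root_.ContextFreeRule.Rewrites.append_cases {N : Type*} {r : ContextFreeRule T N} :
    ∀ {u v w : List (Symbol T N)}, r.Rewrites (u ++ v) w →
      (∃ u', r.Rewrites u u' ∧ w = u' ++ v) ∨ ∃ v', r.Rewrites v v' ∧ w = u ++ v'
  | [], _, _, h => .inr ⟨_, h, rfl⟩
  | _ :: _, _, _, .head _ => .inl ⟨_, .head _, by simp⟩
  | a :: _, _, _, .cons _ h => by
    rcases h.append_cases with ⟨u', hu, rfl⟩ | ⟨v', hv, rfl⟩
    · exact .inl ⟨a :: u', hu.cons a, rfl⟩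
    · exact .inr ⟨v', hv, rfl⟩

namespace ContextFreeGrammar

variable {g : ContextFreeGrammar.{uN} T} {u v w : List (Symbol T g.NT)}

lemma Produces.derives (h : g.Produces u v) : g.Derives u v :=
  .single h

lemma Produces.trans_derives (huv : g.Produces u v) (hvw : g.Derives v w) : g.Derives u w :=
  .head huv hvw

lemma Produces.append_left (h : g.Produces v w) (p : List (Symbol T g.NT)) :
    g.Produces (p ++ v) (p ++ w) :=
  let ⟨r, hr, hrw⟩ := h; ⟨r, hr, hrw.append_left p⟩

lemma Produces.append_right (h : g.Produces v w) (p : List (Symbol T g.NT)) :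
    g.Produces (v ++ p) (w ++ p) :=
  let ⟨r, hr, hrw⟩ := h; ⟨r, hr, hrw.append_right p⟩

lemma Derives.append_left (h : g.Derives v w) (p : List (Symbol T g.NT)) :
    g.Derives (p ++ v) (p ++ w) := by
  induction h with
  | refl => exact .refl
  | tail _ hp ih => exact ih.tail (hp.append_left p)

lemma Derives.append_right (h : g.Derives v w) (p : List (Symbol T g.NT)) :
    g.Derives (v ++ p) (w ++ p) := by
  induction h with
  | refl => exact .refl
  | tail _ hp ih => exact ih.tail (hp.append_right p)

lemma Derives.append {u₁ u₂ v₁ v₂ : List (Symbol T g.NT)} (h₁ : g.Derives u₁ v₁)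
    (h₂ : g.Derives u₂ v₂) : g.Derives (u₁ ++ u₂) (v₁ ++ v₂) :=
  (h₁.append_right u₂).trans (h₂.append_left v₁)

lemma produces_of_mem_rules {r : ContextFreeRule T g.NT} (hr : r ∈ g.rules) :
    g.Produces [.nonterminal r.input] r.output :=
  ⟨r, hr, .input_output⟩

lemma not_produces_map_terminal (w : List T) : ¬ g.Produces (w.map .terminal) v := by
  rintro ⟨r, -, hr⟩
  simpa using hr.nonterminal_input_mem

lemma map_terminal_injective :
    Function.Injective (List.map (Symbol.terminal (N := g.NT)) : List T → _) :=
  List.map_injective_iff.mpr fun _ _ => Symbol.terminal.inj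

lemma Produces.append_cases (h : g.Produces (u ++ v) w) :
    (∃ u', g.Produces u u' ∧ w = u' ++ v) ∨ ∃ v', g.Produces v v' ∧ w = u ++ v' := by
  obtain ⟨r, hr, hrw⟩ := h
  exact hrw.append_cases.imp (fun ⟨u', hu, hw⟩ => ⟨u', ⟨r, hr, hu⟩, hw⟩)
    fun ⟨v', hv, hw⟩ => ⟨v', ⟨r, hr, hv⟩, hw⟩

inductive DerivesIn (g : ContextFreeGrammar.{uN} T) :
    ℕ → List (Symbol T g.NT) → List (Symbol T g.NT) → Prop
  | refl (u : List (Symbol T g.NT)) : g.DerivesIn 0 u u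
  | head {n : ℕ} {u v w : List (Symbol T g.NT)} :
      g.Produces u v → g.DerivesIn n v w → g.DerivesIn (n + 1) u w

namespace DerivesIn

variable {n : ℕ}

lemma derives (h : g.DerivesIn n u v) : g.Derives u v := by
  induction h with
  | refl => exact .refl
  | head hp _ ih => exact .head hp ih

lemma tail (h : g.DerivesIn n u v) (hp : g.Produces v w) : g.DerivesIn (n + 1) u w := by
  induction h with
  | refl => exact .head hp (.refl _)
  | head hp' _ ih => exact .head hp' (ih hp)

lemma append_split (h : g.DerivesIn n (u ++ v) w) :
    ∃ n₁ n₂ w₁ w₂, n₁ + n₂ = n ∧ w = w₁ ++ w₂ ∧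
      g.DerivesIn n₁ u w₁ ∧ g.DerivesIn n₂ v w₂ := by
  generalize huv : u ++ v = x at h
  induction h generalizing u v with
  | refl => exact ⟨0, 0, u, v, rfl, huv.symm, .refl u, .refl v⟩
  | head hp _ ih =>
    subst huv
    rcases hp.append_cases with ⟨u', hu, rfl⟩ | ⟨v', hv, rfl⟩
    · obtain ⟨n₁, n₂, w₁, w₂, rfl, rfl, h₁, h₂⟩ := ih rfl
      exact ⟨n₁ + 1, n₂, w₁, w₂, by omega, rfl, .head hu h₁, h₂⟩
    · obtain ⟨n₁, n₂, w₁, w₂, rfl, rfl, h₁, h₂⟩ := ih rfl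
      exact ⟨n₁, n₂ + 1, w₁, w₂, by omega, rfl, h₁, .head hv h₂⟩

lemma of_map_terminal {x : List T} (h : g.DerivesIn n (x.map .terminal) v) :
    n = 0 ∧ v = x.map .terminal := by
  cases h with
  | refl => exact ⟨rfl, rfl⟩
  | head hp _ => exact absurd hp (not_produces_map_terminal x)

lemma append_split_terminal {x : List T} (h : g.DerivesIn n (u ++ v) (x.map .terminal)) :
    ∃ n₁ n₂ x₁ x₂, n₁ + n₂ = n ∧ x = x₁ ++ x₂ ∧
      g.DerivesIn n₁ u (x₁.map .terminal) ∧ g.DerivesIn n₂ v (x₂.map .terminal) := by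
  obtain ⟨n₁, n₂, w₁, w₂, hn, hw, h₁, h₂⟩ := h.append_split
  obtain ⟨x₁, x₂, rfl, rfl, rfl⟩ := List.map_eq_append_iff.mp hw
  exact ⟨n₁, n₂, x₁, x₂, hn, rfl, h₁, h₂⟩

lemma of_map_terminal_append {γ x : List T}
    (h : g.DerivesIn n (γ.map .terminal ++ v) (x.map .terminal)) :
    ∃ x', x = γ ++ x' ∧ g.DerivesIn n v (x'.map .terminal) := by
  obtain ⟨n₁, n₂, x₁, x₂, rfl, rfl, h₁, h₂⟩ := h.append_split_terminal
  obtain ⟨rfl, hx₁⟩ := h₁.of_map_terminal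
  obtain rfl := map_terminal_injective hx₁
  exact ⟨x₂, rfl, by simpa using h₂⟩

lemma exists_rule_of_nonterminal {A : g.NT} {x : List T}
    (h : g.DerivesIn n [.nonterminal A] (x.map .terminal)) :
    ∃ k, n = k + 1 ∧
      ∃ r ∈ g.rules, r.input = A ∧ g.DerivesIn k r.output (x.map .terminal) := by
  generalize hx : x.map Symbol.terminal = y at h
  cases h with
  | refl => cases x <;> simp at hx
  | head hp h =>
    subst hx
    obtain ⟨r, hr, hrw⟩ := hp
    cases hrw with
    | head => exact ⟨_, rfl, r, hr, rfl, by simpa using h⟩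
    | cons _ hrw => cases hrw

end DerivesIn

lemma Derives.exists_derivesIn (h : g.Derives u v) : ∃ n, g.DerivesIn n u v := by
  induction h with
  | refl => exact ⟨0, .refl _⟩
  | tail _ hp ih =>
    obtain ⟨n, hn⟩ := ih
    exact ⟨n + 1, hn.tail hp⟩

def terminals (g : ContextFreeGrammar.{uN} T) : Set T :=
  {t | ∃ r ∈ g.rules, Symbol.terminal t ∈ r.output}

lemma terminals_finite (g : ContextFreeGrammar.{uN} T) : g.terminals.Finite :=
  (g.rules.finite_toSet.biUnion fun r _ =>
    r.output.finite_toSet.preimage fun _ _ _ _ => Symbol.terminal.inj).subset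
    fun _ ⟨_, hr, ht⟩ => Set.mem_biUnion hr ht

lemma Derives.terminal_mem {t : T} (h : g.Derives u v) (ht : Symbol.terminal t ∈ v) :
    Symbol.terminal t ∈ u ∨ t ∈ g.terminals := by
  induction h with
  | refl => exact .inl ht
  | tail _ hp ih =>
    obtain ⟨r, hr, hrw⟩ := hp
    obtain ⟨p, q, rfl, rfl⟩ := hrw.exists_parts
    simp only [List.mem_append, List.mem_singleton, reduceCtorEq, or_false] at ih ht
    rcases ht with (ht | ht) | ht
    · exact ih (.inl ht)
    · exact .inr ⟨r, hr, ht⟩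
    · exact ih (.inr ht)

lemma mem_terminals_of_mem_language {w : List T} (hw : w ∈ g.language) {t : T} (ht : t ∈ w) :
    t ∈ g.terminals :=
  (Derives.terminal_mem hw (List.mem_map_of_mem ht)).resolve_left (by simp)

abbrev reverse (g : ContextFreeGrammar.{uN} T) : ContextFreeGrammar.{uN} T :=
  ⟨g.NT, g.initial,
    g.rules.map ⟨ContextFreeRule.reverse, ContextFreeRule.reverse_injective⟩⟩

lemma produces_reverse_iff : g.reverse.Produces u v ↔ g.Produces u.reverse v.reverse := by
  constructor
  · rintro ⟨_, hr, hrw⟩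
    obtain ⟨r, hr₀, rfl⟩ := Finset.mem_map.mp hr
    exact ⟨r, hr₀, ContextFreeRule.rewrites_reverse_comm.mp hrw⟩
  · rintro ⟨r, hr, hrw⟩
    exact ⟨r.reverse, Finset.mem_map_of_mem _ hr, ContextFreeRule.rewrites_reverse_comm.mpr hrw⟩

lemma Derives.reverse (h : g.Derives u v) : g.reverse.Derives u.reverse v.reverse := by
  induction h with
  | refl => exact .refl
  | tail _ hp ih => exact ih.tail (produces_reverse_iff.mpr (by simpa using hp))

lemma derives_reverse_iff : g.reverse.Derives u v ↔ g.Derives u.reverse v.reverse := by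
  refine ⟨fun h => ?_, fun h => by simpa using h.reverse⟩
  induction h with
  | refl => exact .refl
  | tail _ hp ih => exact ih.tail (produces_reverse_iff.mp hp)

lemma language_reverse : g.reverse.language = g.language.reverse := by
  ext w
  change g.reverse.Derives [.nonterminal g.initial] (w.map .terminal) ↔
    g.Derives [.nonterminal g.initial] (w.reverse.map .terminal)
  rw [derives_reverse_iff, List.map_reverse]
  rfl

end ContextFreeGrammar

lemma LeftLinear.reverse {g : ContextFreeGrammar.{uN} T} (hg : LeftLinear g) :
    RightLinear g.reverse := by
  intro _ hr
  obtain ⟨r, hr₀, rfl⟩ := Finset.mem_map.mp hr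
  rcases hg r hr₀ with ⟨β, hβ⟩ | ⟨B, β, hβ⟩
  · exact .inl ⟨β.reverse, show r.output.reverse = _ by simp [hβ, List.map_reverse]⟩
  · exact .inr ⟨B, β.reverse, show r.output.reverse = _ by simp [hβ, List.map_reverse]⟩

namespace RightLinear

variable {g : ContextFreeGrammar.{uN} T}

lemma exists_suffix_split (hg : RightLinear g) {n : ℕ} {A : g.NT} {u w : List T}
    (h : g.DerivesIn n [.nonterminal A] ((u ++ w).map .terminal)) :
    ∃ r ∈ g.rules, ∃ s, s <:+ r.output ∧
      g.Derives [.nonterminal A] (u.map .terminal ++ s) ∧ g.Derives s (w.map .terminal) := by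
  induction n generalizing A u with
  | zero => obtain ⟨k, hk, -⟩ := h.exists_rule_of_nonterminal; omega
  | succ k ih =>
    obtain ⟨_, hk, r, hr, rfl, hd⟩ := h.exists_rule_of_nonterminal
    obtain rfl : _ = k := (Nat.succ_injective hk).symm
    have hstep := ContextFreeGrammar.produces_of_mem_rules hr
    rcases hg r hr with ⟨γ, hγ⟩ | ⟨B, γ, hγ⟩
    · rw [hγ] at hd hstep
      obtain rfl := ContextFreeGrammar.map_terminal_injective hd.of_map_terminal.2
      refine ⟨r, hr, w.map .terminal, ?_, by simpa using hstep.derives, .refl⟩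
      rw [hγ, List.map_append]
      exact List.suffix_append _ _
    · rw [hγ] at hd hstep
      obtain ⟨x, hx, hB⟩ := hd.of_map_terminal_append
      rcases List.append_eq_append_iff.mp hx with ⟨a, rfl, rfl⟩ | ⟨c, rfl, rfl⟩
      · refine ⟨r, hr, a.map .terminal ++ [.nonterminal B], ?_, by simpa using hstep.derives,
          by simpa using hB.derives.append_left (a.map .terminal)⟩
        rw [hγ, List.map_append, List.append_assoc]
        exact List.suffix_append _ _
      · obtain ⟨r', hr', s, hs, h₁, h₂⟩ := ih (u := c) hB
        refine ⟨r', hr', s, hs, hstep.trans_derives ?_, h₂⟩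
        simpa using h₁.append_left (γ.map .terminal)

theorem isRegular (hg : RightLinear g) : g.language.IsRegular := by
  set suffixes : Set (List (Symbol T g.NT)) := ⋃ r ∈ g.rules, {s | s <:+ r.output}
  have hfin : suffixes.Finite :=
    Set.Finite.biUnion g.rules.finite_toSet fun r _ => by
      simpa only [List.mem_tails] using r.output.tails.finite_toSet
  refine .of_finite_range_leftQuotient <| (hfin.finite_subsets.image
    fun F => ({w | ∃ s ∈ F, g.Derives s (w.map .terminal)} : Language T)).subset ?_
  rintro _ ⟨u, rfl⟩
  refine ⟨{s ∈ suffixes | g.Derives [.nonterminal g.initial] (u.map .terminal ++ s)},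
    fun s hs => hs.1, ?_⟩
  ext w
  constructor
  · rintro ⟨s, ⟨-, hs⟩, hw⟩
    change g.Derives _ _
    simpa using Relation.ReflTransGen.trans hs (hw.append_left _)
  · intro hw
    obtain ⟨n, hn⟩ := ContextFreeGrammar.Derives.exists_derivesIn hw
    obtain ⟨r, hr, s, hs, h₁, h₂⟩ := hg.exists_suffix_split hn
    exact ⟨s, ⟨Set.mem_biUnion hr hs, h₁⟩, h₂⟩

end RightLinear

theorem LeftLinear.isRegular {g : ContextFreeGrammar.{uN} T} (hg : LeftLinear g) :
    g.language.IsRegular := by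
  have h := hg.reverse.isRegular
  rw [ContextFreeGrammar.language_reverse] at h
  exact h.of_reverse

section Substitution

variable {α β : Type*} {f : α → Language β}

theorem _root_.Language.isRegular_singleton (x : List α) : ({x} : Language α).IsRegular := by
  refine .of_finite_range_leftQuotient <|
    ((x.tails.finite_toSet.image fun y => ({y} : Language α)).insert 0).subset ?_
  rintro _ ⟨u, rfl⟩
  by_cases hu : u <+: x
  · obtain ⟨y, rfl⟩ := hu
    refine .inr ⟨y, (List.mem_tails _ _).mpr (List.suffix_append u y), ?_⟩
    ext z
    change z = y ↔ u ++ z = u ++ y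
    simp
  · exact .inl (Set.eq_empty_of_forall_notMem fun z hz => hu ⟨z, hz⟩)

lemma substStr_append (f : α → Language β) (u v : List α) :
    substStr f (u ++ v) = substStr f u * substStr f v := by
  induction u with
  | nil => exact (one_mul _).symm
  | cons c u ih => simp only [List.cons_append, substStr, ih, mul_assoc]

lemma substStr_singleton (f : α → Language β) (c : α) : substStr f [c] = f c :=
  mul_one _

lemma mem_substLang {L : Language α} {x : List β} :
    x ∈ substLang f L ↔ ∃ u ∈ L, x ∈ substStr f u := by
  constructor
  · rintro ⟨_, ⟨u, rfl⟩, _, ⟨hu, rfl⟩, hx⟩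
    exact ⟨u, hu, hx⟩
  · rintro ⟨u, hu, hx⟩
    exact Set.mem_iUnion₂.mpr ⟨u, hu, hx⟩

lemma append_mem_substStr {w x : List β} :
    ∀ {u₀ : List α}, w ++ x ∈ substStr f u₀ →
      (∃ u u', u₀ = u ++ u' ∧ w ∈ substStr f u ∧ x ∈ substStr f u') ∨
      ∃ u c u' y z, u₀ = u ++ c :: u' ∧ w = y ++ z ∧ y ∈ substStr f u ∧
        x ∈ (f c).leftQuotient z * substStr f u'
  | [], h => by
    obtain ⟨rfl, rfl⟩ := List.append_eq_nil_iff.mp h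
    exact .inl ⟨[], [], rfl, rfl, rfl⟩
  | c :: u₁, h => by
    obtain ⟨p, hp, q, hq, hpq⟩ := Language.mem_mul.mp h
    rcases List.append_eq_append_iff.mp hpq with ⟨a, rfl, rfl⟩ | ⟨a, rfl, rfl⟩
    · rcases append_mem_substStr hq with ⟨u, u', rfl, hu, hu'⟩ |
        ⟨u, c', u', y, z, rfl, rfl, hy, hx⟩
      · exact .inl ⟨c :: u, u', rfl, Language.append_mem_mul hp hu, hu'⟩
      · exact .inr ⟨c :: u, c', u', p ++ y, z, rfl, by simp, Language.append_mem_mul hp hy, hx⟩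
    · exact .inr ⟨[], c, u₁, [], w, rfl, rfl, rfl, Language.append_mem_mul hp hq⟩

lemma mem_leftQuotient_substLang {L : Language α} {w x : List β} :
    x ∈ (substLang f L).leftQuotient w ↔
      (∃ u, w ∈ substStr f u ∧ x ∈ substLang f (L.leftQuotient u)) ∨
      ∃ u c y z, w = y ++ z ∧ y ∈ substStr f u ∧
        x ∈ (f c).leftQuotient z * substLang f (L.leftQuotient (u ++ [c])) := by
  simp only [Language.mem_leftQuotient, mem_substLang, Language.mem_mul]
  constructor
  · rintro ⟨u₀, hu₀, hwx⟩
    rcases append_mem_substStr hwx with ⟨u, u', rfl, hw, hx⟩ |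
      ⟨u, c, u', y, z, rfl, rfl, hy, hx⟩
    · exact .inl ⟨u, hw, u', hu₀, hx⟩
    · obtain ⟨z', hz', r, hr, rfl⟩ := Language.mem_mul.mp hx
      exact .inr ⟨u, c, y, z, rfl, hy, z', hz', r, ⟨u', by simpa using hu₀, hr⟩, rfl⟩
  · rintro (⟨u, hw, u', hu', hx⟩ |
      ⟨u, c, y, z, rfl, hy, z', hz', r, ⟨u', hu', hr⟩, rfl⟩)
    · exact ⟨u ++ u', hu', by rw [substStr_append]; exact Language.append_mem_mul hw hx⟩
    · refine ⟨u ++ [c] ++ u', hu', ?_⟩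
      rw [substStr_append, substStr_append, substStr_singleton]
      simpa using Language.append_mem_mul (Language.append_mem_mul hy hz') hr

theorem isRegular_substLang {L : Language α} {S : Set α} (hL : L.IsRegular) (hS : S.Finite)
    (hLS : ∀ u ∈ L, ∀ c ∈ u, c ∈ S) (hf : ∀ c ∈ S, (f c).IsRegular) :
    (substLang f L).IsRegular := by
  set V : Set (Language β) :=
    (fun p : Language β × Language α => p.1 * substLang f p.2) ''
        ((⋃ c ∈ S, Set.range (f c).leftQuotient) ×ˢ Set.range L.leftQuotient) ∪
      substLang f '' Set.range L.leftQuotient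
  have hV : V.Finite :=
    (((hS.biUnion fun c hc => (hf c hc).finite_range_leftQuotient).prod
      hL.finite_range_leftQuotient).image _).union (hL.finite_range_leftQuotient.image _)
  refine .of_finite_range_leftQuotient <|
    (hV.finite_subsets.image fun Q => ({x | ∃ P ∈ Q, x ∈ P} : Language β)).subset ?_
  rintro _ ⟨w, rfl⟩
  -- each left quotient is the union of the members of `V` that it contains
  refine ⟨{P ∈ V | P ≤ (substLang f L).leftQuotient w}, fun P hP => hP.1, ?_⟩
  ext x
  refine ⟨fun ⟨P, ⟨_, hPw⟩, hx⟩ => hPw hx, fun hx => ?_⟩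
  rcases mem_leftQuotient_substLang.mp hx with ⟨u, hw, hx⟩ | ⟨u, c, y, z, rfl, hy, hx⟩
  · refine ⟨_, ⟨.inr ⟨_, ⟨u, rfl⟩, rfl⟩, fun x hx => ?_⟩, hx⟩
    exact mem_leftQuotient_substLang.mpr (.inl ⟨u, hw, hx⟩)
  · have hc : c ∈ S := by
      obtain ⟨_, -, _, hr, -⟩ := Language.mem_mul.mp hx
      obtain ⟨u', hu', -⟩ := mem_substLang.mp hr
      exact hLS _ hu' c (by simp)
    have hP : (f c).leftQuotient z * substLang f (L.leftQuotient (u ++ [c])) ∈ V :=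
      .inl ⟨(_, _), ⟨Set.mem_biUnion hc ⟨z, rfl⟩, ⟨u ++ [c], rfl⟩⟩, rfl⟩
    refine ⟨_, ⟨hP, fun x hx => ?_⟩, hx⟩
    exact mem_leftQuotient_substLang.mpr (.inr ⟨u, c, y, z, rfl, hy, hx⟩)

end Substitution

section Decomposition

variable {g : ContextFreeGrammar.{uN} T} {X : g.NT}

def unconvSym (g : ContextFreeGrammar.{uN} T) (X : g.NT) :
    Symbol (T ⊕ g.NT) (defSub g X).NT → Symbol T g.NT
  | .terminal c => Sum.elim .terminal .nonterminal c
  | .nonterminal Y => .nonterminal Y.1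

def pseudoSubst (g : ContextFreeGrammar.{uN} T) : T ⊕ g.NT → Language T :=
  Sum.elim (fun t => {[t]}) (langFrom g)

lemma unconvSym_convSym (s : Symbol T g.NT) : unconvSym g X (convSym g X s) = s := by
  cases s with
  | terminal t => rfl
  | nonterminal Y => by_cases h : SameComp g X Y <;> simp [convSym, h, unconvSym]

lemma map_unconvSym_map_convSym (l : List (Symbol T g.NT)) :
    (l.map (convSym g X)).map (unconvSym g X) = l := by
  induction l with
  | nil => rfl
  | cons s l ih => exact congrArg₂ List.cons (unconvSym_convSym s) ih

lemma mem_defSub_rules {r' : ContextFreeRule (T ⊕ g.NT) (defSub g X).NT} :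
    r' ∈ (defSub g X).rules ↔ ∃ r ∈ g.rules, ∃ h : SameComp g X r.input,
      r' = ⟨⟨r.input, h⟩, r.output.map (convSym g X)⟩ := by
  suffices key : ∀ r'' : ContextFreeRule (T ⊕ g.NT) {Y : g.NT // SameComp g X Y},
      r'' ∈ (g.rules.toList.filterMap fun r =>
        if h : SameComp g X r.input then some ⟨⟨r.input, h⟩, r.output.map (convSym g X)⟩
        else none).toFinset ↔
      ∃ r ∈ g.rules, ∃ h : SameComp g X r.input,
        r'' = ⟨⟨r.input, h⟩, r.output.map (convSym g X)⟩
    from key r'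
  intro r'
  simp only [List.mem_toFinset, List.mem_filterMap, Finset.mem_toList]
  constructor
  · rintro ⟨r, hr, hr'⟩
    by_cases h : SameComp g X r.input
    · rw [dif_pos h, Option.some_inj] at hr'
      exact ⟨r, hr, h, hr'.symm⟩
    · simp [h] at hr'
  · rintro ⟨r, hr, h, rfl⟩
    exact ⟨r, hr, by rw [dif_pos h]⟩

lemma defSub_produces_of_mem_rules {r : ContextFreeRule T g.NT} (hr : r ∈ g.rules)
    {B : (defSub g X).NT} (hB : r.input = B.1) :
    (defSub g X).Produces [.nonterminal B] (r.output.map (convSym g X)) := by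
  obtain ⟨B, hBX⟩ := B
  subst hB
  exact ContextFreeGrammar.produces_of_mem_rules (mem_defSub_rules.mpr ⟨r, hr, hBX, rfl⟩)

lemma defSub_produces_map_unconvSym {s s' : List (Symbol (T ⊕ g.NT) (defSub g X).NT)}
    (h : (defSub g X).Produces s s') :
    g.Produces (s.map (unconvSym g X)) (s'.map (unconvSym g X)) := by
  obtain ⟨r', hr', hrw⟩ := h
  obtain ⟨p, q, rfl, rfl⟩ := hrw.exists_parts
  obtain ⟨r, hr, -, rfl⟩ := mem_defSub_rules.mp hr'
  refine ⟨r, hr, ?_⟩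
  erw [List.map_append, List.map_append, List.map_append, List.map_append,
    map_unconvSym_map_convSym]
  exact r.rewrites_of_exists_parts _ _

lemma defSub_derives_map_unconvSym {s s' : List (Symbol (T ⊕ g.NT) (defSub g X).NT)}
    (h : (defSub g X).Derives s s') :
    g.Derives (s.map (unconvSym g X)) (s'.map (unconvSym g X)) := by
  induction h with
  | refl => exact .refl
  | tail _ hp ih => exact ih.tail (defSub_produces_map_unconvSym hp)

lemma derives_of_mem_substStr {ω : List (T ⊕ g.NT)} {w : List T}
    (hw : w ∈ substStr (pseudoSubst g) ω) :
    g.Derives (ω.map (Sum.elim .terminal .nonterminal)) (w.map .terminal) := by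
  induction ω generalizing w with
  | nil =>
    obtain rfl : w = [] := hw
    exact .refl
  | cons c ω ih =>
    obtain ⟨p, hp, q, hq, rfl⟩ := Language.mem_mul.mp hw
    rw [List.map_append]
    refine ContextFreeGrammar.Derives.append (u₁ := [_]) ?_ (ih hq)
    cases c with
    | inl t =>
      obtain rfl : p = [t] := hp
      exact .refl
    | inr Y => exact hp

lemma exists_defSub_derives_of_derivesIn {n : ℕ}
    {s : List (Symbol (T ⊕ g.NT) (defSub g X).NT)} {w : List T}
    (h : g.DerivesIn n (s.map (unconvSym g X)) (w.map .terminal)) :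
    ∃ ω, (defSub g X).Derives s (ω.map .terminal) ∧ w ∈ substStr (pseudoSubst g) ω := by
  induction n using Nat.strong_induction_on generalizing s w with
  | _ n ih =>
  induction s generalizing n w with
  | nil =>
    obtain rfl : w = [] := by simpa using (h.of_map_terminal (x := [])).2
    exact ⟨[], .refl, rfl⟩
  | cons a s ihs =>
    obtain ⟨n₁, n₂, w₁, w₂, rfl, rfl, h₁, h₂⟩ :=
      h.append_split_terminal (u := [unconvSym g X a])
    obtain ⟨ω₂, hd₂, hw₂⟩ := ihs n₂ (fun m hm => ih m (by omega)) h₂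
    obtain ⟨ω₁, hd₁, hw₁⟩ : ∃ ω₁, (defSub g X).Derives [a] (ω₁.map .terminal) ∧
        w₁ ∈ substStr (pseudoSubst g) ω₁ := by
      rcases a with (t | Y) | B
      · obtain rfl := ContextFreeGrammar.map_terminal_injective (h₁.of_map_terminal (x := [t])).2
        exact ⟨[.inl t], .refl, by rw [substStr_singleton]; rfl⟩
      · exact ⟨[.inr Y], .refl, by rw [substStr_singleton]; exact h₁.derives⟩
      · obtain ⟨k, rfl, r, hr, hB, hk⟩ := h₁.exists_rule_of_nonterminal
        obtain ⟨ω₁, hd, hw⟩ := ih k (by omega) (s := r.output.map (convSym g X))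
          (by convert hk; exact map_unconvSym_map_convSym r.output)
        exact ⟨ω₁, .head (defSub_produces_of_mem_rules hr hB) hd, hw⟩
    refine ⟨ω₁ ++ ω₂, by simpa using hd₁.append hd₂, ?_⟩
    rw [substStr_append]
    exact Language.append_mem_mul hw₁ hw₂

theorem langFrom_eq_substLang (X : g.NT) :
    langFrom g X = substLang (pseudoSubst g) (defSub g X).language := by
  ext w
  rw [mem_substLang]
  constructor
  · intro hw
    obtain ⟨n, hn⟩ := ContextFreeGrammar.Derives.exists_derivesIn hw
    exact exists_defSub_derives_of_derivesIn (s := [.nonterminal (defSub g X).initial]) hn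
  · rintro ⟨ω, hω, hw⟩
    have h := defSub_derives_map_unconvSym hω
    erw [List.map_map] at h
    exact h.trans (derives_of_mem_substStr hw)

lemma mem_terminals_defSub {c : T ⊕ g.NT} (hc : c ∈ (defSub g X).terminals) :
    (∃ t, c = .inl t) ∨ ∃ Y, c = .inr Y ∧ IsPseudo g X Y := by
  obtain ⟨_, hr', hc⟩ := hc
  obtain ⟨r, hr, hX, rfl⟩ := mem_defSub_rules.mp hr'
  obtain ⟨s, hs, hsc⟩ := List.mem_map.mp hc
  cases s with
  | terminal t =>
    cases hsc
    exact .inl ⟨t, rfl⟩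
  | nonterminal Y =>
    by_cases hY : SameComp g X Y
    · simp [convSym, hY] at hsc
    · simp only [convSym, hY, dite_false] at hsc
      exact .inr ⟨Y, (Symbol.terminal.inj hsc).symm, hY, r, hr, hX, hs⟩

end Decomposition

section Condensation

variable {g : ContextFreeGrammar.{uN} T}

lemma setOf_reflTransGen_connStep_finite (X : g.NT) :
    {Y | Relation.ReflTransGen (ConnStep g) X Y}.Finite := by
  refine ((g.rules.finite_toSet.biUnion fun r _ =>
    r.output.finite_toSet.preimage fun _ _ _ _ => Symbol.nonterminal.inj).insert X).subset ?_
  intro Y hY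
  rcases Relation.ReflTransGen.cases_tail hY with rfl | ⟨Z, -, r, hr, -, hY⟩
  · exact Set.mem_insert _ _
  · exact Set.mem_insert_of_mem _ (Set.mem_biUnion hr hY)

lemma IsPseudo.ncard_reflTransGen_lt {X Y : g.NT} (h : IsPseudo g X Y) :
    {Z | Relation.ReflTransGen (ConnStep g) Y Z}.ncard <
      {Z | Relation.ReflTransGen (ConnStep g) X Z}.ncard := by
  obtain ⟨hXY, r, hr, hX, hY⟩ := h
  have hreach : Relation.ReflTransGen (ConnStep g) X Y := hX.1.tail ⟨r, hr, rfl, hY⟩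
  exact Set.ncard_lt_ncard ⟨fun _ hZ => hreach.trans hZ, fun h => hXY ⟨hreach, h .refl⟩⟩
    (setOf_reflTransGen_connStep_finite X)

theorem langFrom_isRegular (h : ∀ X : g.NT, LeftLinear (defSub g X) ∨ RightLinear (defSub g X))
    (X : g.NT) : (langFrom g X).IsRegular := by
  induction X using
    (measure fun X => {Y | Relation.ReflTransGen (ConnStep g) X Y}.ncard).wf.induction with
  | h X ih =>
  rw [langFrom_eq_substLang]
  refine isRegular_substLang ((h X).elim LeftLinear.isRegular RightLinear.isRegular)
    (defSub g X).terminals_finite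
    (fun _ hu _ => ContextFreeGrammar.mem_terminals_of_mem_language hu) fun c hc => ?_
  rcases mem_terminals_defSub hc with ⟨t, rfl⟩ | ⟨Y, rfl, hY⟩
  · exact Language.isRegular_singleton [t]
  · exact ih Y hY.ncard_reflTransGen_lt

end Condensation

end LRApprox

open LRApprox

/-- If every defining subgrammar `def(X)` in the
strongly-connected-component decomposition of a CFG `G` is left-linear or
right-linear, then `L(G)` is regular. -/
theorem decomposition_linear_regular {T : Type*} (g : LRApprox.ContextFreeGrammar T)
    (h : ∀ X : g.NT, LeftLinear (defSub g X) ∨ RightLinear (defSub g X)) :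
    g.language.IsRegular :=
  langFrom_isRegular h g.initial
end
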